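/- For the ℓ₄-norm shrunk vector x̃ with threshold τ, the operator norm of x̃ x̃ᵀ − E(x̃ x̃ᵀ) is at most √d·τ² + √R, where R bounds the fourth moments E(vᵀx)⁴ over unit v. -/

import Mathlib

/-! Both `⟨v, x̃⟩²` and its mean lie in `[0, √d τ²]`, since
`⟨v, x̃⟩² ≤ ‖x̃‖₂² ≤ √d ‖x̃‖₄² ≤ √d τ²` for a unit vector `v`; two numbers in that interval
differ by at most `√d τ² ≤ √d τ² + √R`. -/

open MeasureTheory

/-- Entrywise ℓ₄-norm of a vector. -/
noncomputable def l4norm {d : ℕ} (x : EuclideanSpace ℝ (Fin d)) : ℝ :=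
  (∑ j, (x j) ^ 4) ^ ((1 : ℝ) / 4)

/-- ℓ₄-norm shrinkage of a vector at threshold τ. -/
noncomputable def shrink {d : ℕ} (τ : ℝ) (x : EuclideanSpace ℝ (Fin d)) :
    EuclideanSpace ℝ (Fin d) :=
  (min (l4norm x) τ / l4norm x) • x

lemma l4norm_nonneg {d : ℕ} (x : EuclideanSpace ℝ (Fin d)) : 0 ≤ l4norm x := by
  unfold l4norm
  positivity

lemma l4norm_pow_four {d : ℕ} (x : EuclideanSpace ℝ (Fin d)) :
    l4norm x ^ 4 = ∑ j, x j ^ 4 := by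
  rw [l4norm, one_div]
  exact_mod_cast Real.rpow_inv_natCast_pow (n := 4) (by positivity) (by norm_num)

lemma l4norm_smul {d : ℕ} (c : ℝ) (x : EuclideanSpace ℝ (Fin d)) :
    l4norm (c • x) = |c| * l4norm x := by
  have hc : 0 ≤ |c| * l4norm x := mul_nonneg (abs_nonneg c) (l4norm_nonneg x)
  rw [← pow_left_inj₀ (l4norm_nonneg _) hc (by norm_num : 4 ≠ 0), mul_pow, l4norm_pow_four,
    l4norm_pow_four, Finset.mul_sum, Even.pow_abs ⟨2, rfl⟩]
  simp [mul_pow]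

lemma l4norm_shrink_le {d : ℕ} (τ : ℝ) (x : EuclideanSpace ℝ (Fin d)) :
    l4norm (shrink τ x) ≤ |τ| := by
  rw [shrink, l4norm_smul]
  rcases (l4norm_nonneg x).eq_or_lt with hx | hx
  · simp [← hx]
  rw [abs_div, abs_of_pos hx, div_mul_cancel₀ _ hx.ne']
  exact abs_le.mpr ⟨le_min (by linarith [abs_nonneg τ]) (neg_abs_le τ),
    (min_le_right _ _).trans (le_abs_self τ)⟩

lemma norm_sq_le_sqrt_card_mul_l4norm_sq {d : ℕ} (x : EuclideanSpace ℝ (Fin d)) :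
    ‖x‖ ^ 2 ≤ Real.sqrt d * l4norm x ^ 2 := by
  rw [EuclideanSpace.norm_sq_eq, ← pow_le_pow_iff_left₀ (by positivity) (by positivity)
    two_ne_zero, mul_pow, Real.sq_sqrt (Nat.cast_nonneg _), ← pow_mul, l4norm_pow_four]
  have hcs := sq_sum_le_card_mul_sum_sq (s := Finset.univ) (f := fun j => x j ^ 2)
  simp_rw [← pow_mul, Finset.card_univ, Fintype.card_fin] at hcs
  simpa only [Real.norm_eq_abs, sq_abs] using hcs

lemma inner_shrink_sq_le {d : ℕ} (τ : ℝ) (y v : EuclideanSpace ℝ (Fin d)) (hv : ‖v‖ ≤ 1) :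
    inner ℝ v (shrink τ y) ^ 2 ≤ Real.sqrt d * τ ^ 2 := by
  have hinner : |inner ℝ v (shrink τ y)| ≤ ‖shrink τ y‖ :=
    (abs_real_inner_le_norm _ _).trans
      (mul_le_of_le_one_left (norm_nonneg _) hv)
  calc inner ℝ v (shrink τ y) ^ 2 ≤ ‖shrink τ y‖ ^ 2 := by
        rw [← sq_abs]; gcongr
    _ ≤ Real.sqrt d * l4norm (shrink τ y) ^ 2 := norm_sq_le_sqrt_card_mul_l4norm_sq _
    _ ≤ Real.sqrt d * τ ^ 2 := by
        rw [← sq_abs τ]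
        gcongr
        · exact l4norm_nonneg _
        · exact l4norm_shrink_le τ y

-- No integrability is needed: a non-integrable `f` has integral `0`, which also lies in `[0, B]`.
lemma abs_sub_integral_le_of_nonneg_of_le {Ω : Type*} [MeasurableSpace Ω] {μ : Measure Ω}
    [IsProbabilityMeasure μ] {f : Ω → ℝ} {B : ℝ} (hf₀ : ∀ ω, 0 ≤ f ω) (hfB : ∀ ω, f ω ≤ B)
    (ω : Ω) : |f ω - ∫ ω', f ω' ∂μ| ≤ B := by
  have hint₀ : 0 ≤ ∫ ω', f ω' ∂μ := integral_nonneg hf₀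
  have hintB : ∫ ω', f ω' ∂μ ≤ B := by
    have := norm_integral_le_of_norm_le_const (μ := μ)
      (Filter.Eventually.of_forall fun ω' => by
        rw [Real.norm_eq_abs, abs_of_nonneg (hf₀ ω')]; exact hfB ω')
    simpa [Real.norm_eq_abs, abs_of_nonneg hint₀] using this
  rw [abs_sub_le_iff]
  constructor <;> linarith [hf₀ ω, hfB ω]

theorem shrunk_outer_deviation_bound_general {d : ℕ} {Ω : Type*} [MeasurableSpace Ω]
    (μ : Measure Ω) [IsProbabilityMeasure μ]
    (x : Ω → EuclideanSpace ℝ (Fin d)) (R τ : ℝ) :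
    ∀ ω : Ω, ∀ v : EuclideanSpace ℝ (Fin d), ‖v‖ = 1 →
      |(inner ℝ v (shrink τ (x ω)) : ℝ) ^ 2
          - ∫ ω', (inner ℝ v (shrink τ (x ω')) : ℝ) ^ 2 ∂μ|
        ≤ Real.sqrt d * τ ^ 2 + Real.sqrt R := by
  intro ω v hv
  have hdev := abs_sub_integral_le_of_nonneg_of_le (μ := μ) (fun _ => sq_nonneg _)
    (fun ω' => inner_shrink_sq_le τ (x ω') v hv.le) ω
  exact hdev.trans (le_add_of_nonneg_right (Real.sqrt_nonneg R))

/-- ‖x̃ x̃ᵀ − E(x̃ x̃ᵀ)‖_op ≤ √d·τ² + √R, stated via the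
quadratic form over unit vectors (the matrix is symmetric). -/
theorem shrunk_outer_deviation_bound {d : ℕ} {Ω : Type*} [MeasurableSpace Ω]
    (μ : Measure Ω) [IsProbabilityMeasure μ]
    (x : Ω → EuclideanSpace ℝ (Fin d)) (R τ : ℝ) (hτ : 0 < τ)
    (hmeas : AEMeasurable x μ)
    (hR : ∀ v : EuclideanSpace ℝ (Fin d), ‖v‖ = 1 →
      ∫ ω, (inner ℝ v (x ω) : ℝ) ^ 4 ∂μ ≤ R) :
    ∀ ω : Ω, ∀ v : EuclideanSpace ℝ (Fin d), ‖v‖ = 1 →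
      |(inner ℝ v (shrink τ (x ω)) : ℝ) ^ 2
          - ∫ ω', (inner ℝ v (shrink τ (x ω')) : ℝ) ^ 2 ∂μ|
        ≤ Real.sqrt d * τ ^ 2 + Real.sqrt R :=
  shrunk_outer_deviation_bound_general μ x R τ
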